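/- Let L be a finite relatively complemented lattice with minimal element 0 and maximal element e such that μ(x,y) ≠ 0 for all x ≤ y with (x,y) ≠ (0,e). Then L is SSP: every family F ⊆ L satisfies |Str(F)| ≥ |F|. -/

import Mathlib

open scoped Classical

/-- `F` shatters `z`: for every `x ≤ z` there is `w ∈ F` with `w ⊓ z = x`. -/
def Shatters {L : Type*} [SemilatticeInf L] (F : Set L) (z : L) : Prop :=
  ∀ x ≤ z, ∃ w ∈ F, w ⊓ z = x

/-- The set of elements shattered by `F`. -/
def Str {L : Type*} [SemilatticeInf L] (F : Set L) : Set L := {z | Shatters F z}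


/-- The Möbius function of a finite poset. -/
noncomputable def mu {L : Type*} [PartialOrder L] [Fintype L] (x y : L) : ℚ :=
  if x = y then 1
  else if x ≤ y then
    - ∑ z ∈ (Finset.univ.filter fun z => x ≤ z ∧ z < y).attach, mu x z.1
  else 0
termination_by (Finset.univ.filter fun z : L => z < y).card
decreasing_by
  · have hz := (Finset.mem_filter.mp z.2).2.2
    apply Finset.card_lt_card
    constructor
    · intro w hw
      simp only [Finset.mem_filter, Finset.mem_univ, true_and] at hw ⊢
      exact hw.trans hz
    · intro hsub
      have hmem : z.1 ∈ Finset.univ.filter fun w : L => w < y := by simp [hz]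
      have := hsub hmem
      simp at this


/-- A finite lattice is relatively complemented iff it has no 3-element interval
(Björner's characterization). -/
def IsRC (L : Type*) [Lattice L] : Prop :=
  ¬ ∃ x y : L, x < y ∧ ∃! z : L, x < z ∧ z < y

/-!
Let `ζ(z, w) = [z ≤ w]` for `z ∈ L`, `w ∈ F`. Möbius inversion writes every unit vector of
`ℚ^F` through the columns `ζ(t, ·)`, so the columns span `ℚ^F`. If `z` is not shattered, some
`x ≤ z` differs from every `w ⊓ z`, and the expansion
`[w ⊓ z = x] = ∑_{x ≤ t ≤ z} μ(x, t) [t ≤ w]` makes column `z` a combination of the columns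
`t < z` as soon as `μ(x, z) ≠ 0`. By induction the shattered columns already span, whence
`|F| ≤ |Str F|`. The hypothesis on `μ` supplies such an `x` unless `F = L \ {⊥}`, and that family
shatters every `z ≠ ⊤` because relative complementation gives each `z ≠ ⊤` a nonzero `w` with
`w ⊓ z = ⊥`.
-/

section Mobius

variable {L : Type*} [PartialOrder L] [Fintype L]

lemma mu_self (x : L) : mu x x = 1 := by
  rw [mu, if_pos rfl]

lemma mu_of_lt {x y : L} (h : x < y) : mu x y = -∑ t with x ≤ t ∧ t < y, mu x t := by
  rw [mu, if_neg h.ne, if_pos h.le, Finset.sum_attach]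

lemma filter_le_le_eq_insert {x m : L} (h : x ≤ m) :
    Finset.univ.filter (fun t : L => x ≤ t ∧ t ≤ m) =
      insert m (Finset.univ.filter fun t => x ≤ t ∧ t < m) := by
  ext t
  simp only [Finset.mem_filter, Finset.mem_univ, true_and, Finset.mem_insert]
  constructor
  · rintro ⟨h₁, h₂⟩
    exact h₂.eq_or_lt.imp id (⟨h₁, ·⟩)
  · rintro (rfl | ⟨h₁, h₂⟩)
    exacts [⟨h, le_rfl⟩, ⟨h₁, h₂.le⟩]

lemma sum_mu_Icc (x m : L) : ∑ t with x ≤ t ∧ t ≤ m, mu x t = if m = x then 1 else 0 := by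
  by_cases hxm : x ≤ m
  · rw [filter_le_le_eq_insert hxm, Finset.sum_insert (by simp)]
    rcases hxm.lt_or_eq with hlt | rfl
    · rw [mu_of_lt hlt, if_neg hlt.ne', neg_add_cancel]
    · have : Finset.univ.filter (fun t : L => x ≤ t ∧ t < x) = ∅ :=
        Finset.filter_false_of_mem fun t _ ⟨h₁, h₂⟩ => h₂.not_ge h₁
      rw [this, Finset.sum_empty, mu_self, if_pos rfl, add_zero]
  · have : Finset.univ.filter (fun t : L => x ≤ t ∧ t ≤ m) = ∅ :=
      Finset.filter_false_of_mem fun t _ ⟨h₁, h₂⟩ => hxm (h₁.trans h₂)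
    rw [this, Finset.sum_empty, if_neg (by rintro rfl; exact hxm le_rfl)]

lemma sum_mu_mul_ite_le (x w : L) :
    ∑ t with x ≤ t, mu x t * (if t ≤ w then 1 else 0) = if w = x then 1 else 0 := by
  simp only [mul_boole, ← Finset.sum_filter, Finset.filter_filter, sum_mu_Icc]

end Mobius

section Lattice

variable {L : Type*} [Lattice L] [Fintype L]

lemma sum_mu_Icc_mul_ite_le (x z w : L) :
    ∑ t with x ≤ t ∧ t ≤ z, mu x t * (if t ≤ w then 1 else 0) =
      if w ⊓ z = x then 1 else 0 := by
  simp only [mul_boole, ← Finset.sum_filter, Finset.filter_filter, ← sum_mu_Icc]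
  congr 1
  ext t
  simp only [Finset.mem_filter, Finset.mem_univ, true_and, le_inf_iff]
  tauto

end Lattice

section Shattering

variable {L : Type*} [Lattice L] [Fintype L]

noncomputable def zetaColumn (F : Set L) (z : L) : F → ℚ :=
  fun w => if z ≤ (w : L) then 1 else 0

lemma single_eq_sum_mu_smul_zetaColumn (F : Set L) (w : F) :
    Pi.single w 1 = ∑ t with (w : L) ≤ t, mu (w : L) t • zetaColumn F t := by
  funext w'
  simp only [Finset.sum_apply, Pi.smul_apply, smul_eq_mul, zetaColumn, sum_mu_mul_ite_le,
    Pi.single_apply, Subtype.ext_iff]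

lemma zetaColumn_eq_of_forall_inf_ne {F : Set L} {x z : L} (hxz : x ≤ z) (hmu : mu x z ≠ 0)
    (hF : ∀ w ∈ F, w ⊓ z ≠ x) :
    zetaColumn F z = -(mu x z)⁻¹ • ∑ t with x ≤ t ∧ t < z, mu x t • zetaColumn F t := by
  funext w
  have key := sum_mu_Icc_mul_ite_le x z (w : L)
  rw [if_neg (hF w w.2), filter_le_le_eq_insert hxz, Finset.sum_insert (by simp)] at key
  simp only [Pi.smul_apply, Finset.sum_apply, smul_eq_mul, zetaColumn] at key ⊢
  field_simp
  linear_combination key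

variable {F : Set L}
  (hwit : ∀ z ∉ Str F, ∃ x ≤ z, (∀ w ∈ F, w ⊓ z ≠ x) ∧ mu x z ≠ 0)
include hwit

lemma zetaColumn_mem_span_str (z : L) :
    zetaColumn F z ∈ Submodule.span ℚ (Set.range fun s : Str F => zetaColumn F s) := by
  induction z using WellFoundedLT.induction with
  | _ z ih =>
  by_cases hz : z ∈ Str F
  · exact Submodule.subset_span ⟨⟨z, hz⟩, rfl⟩
  obtain ⟨x, hxz, hF, hmu⟩ := hwit z hz
  rw [zetaColumn_eq_of_forall_inf_ne hxz hmu hF]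
  exact Submodule.smul_mem _ _ (Submodule.sum_mem _ fun t ht =>
    Submodule.smul_mem _ _ (ih t (Finset.mem_filter.mp ht).2.2))

lemma span_zetaColumn_str_eq_top :
    Submodule.span ℚ (Set.range fun s : Str F => zetaColumn F s) = ⊤ := by
  rw [eq_top_iff, ← (Pi.basisFun ℚ F).span_eq, Submodule.span_le]
  rintro _ ⟨w, rfl⟩
  rw [SetLike.mem_coe, Pi.basisFun_apply, single_eq_sum_mu_smul_zetaColumn]
  exact Submodule.sum_mem _ fun t _ =>
    Submodule.smul_mem _ _ (zetaColumn_mem_span_str hwit t)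

theorem ncard_le_ncard_str_of_exists_mu_ne_zero : F.ncard ≤ (Str F).ncard := by
  simpa [Module.finrank_fintype_fun_eq_card, Set.ncard_eq_toFinset_card'] using
    finrank_le_of_span_eq_top (span_zetaColumn_str_eq_top hwit)

end Shattering

section BoundedLattice

variable {L : Type*} [Lattice L] [Fintype L] [BoundedOrder L]

lemma IsRC.exists_ne_bot_inf_eq_bot (hRC : IsRC L) {z : L} (hz : z ≠ ⊤) :
    ∃ w, w ≠ ⊥ ∧ w ⊓ z = ⊥ := by
  obtain ⟨w, -, hw⟩ := exists_minimal_le_of_wellFoundedLT (¬ · ≤ z) ⊤ (by simpa using hz)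
  refine ⟨w, fun h => hw.prop (h ▸ bot_le), ?_⟩
  by_contra hd
  -- every `u < w` lies below `z`, hence below `w ⊓ z`; a lower cover of `w ⊓ z`
  -- then spans a 3-element interval with `w`
  have hdw : w ⊓ z < w := inf_le_left.lt_of_ne fun h => hw.prop (h ▸ inf_le_right)
  obtain ⟨c, -, hc⟩ := exists_le_covBy_of_lt (bot_lt_iff_ne_bot.2 hd)
  refine hRC ⟨c, w, hc.lt.trans hdw, w ⊓ z, ⟨hc.lt, hdw⟩, fun u ⟨hcu, huw⟩ => ?_⟩
  have hud : u ≤ w ⊓ z := le_inf huw.le (not_not.1 (hw.not_prop_of_lt huw))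
  exact hud.eq_of_not_lt fun h => hc.2 hcu h

lemma IsRC.compl_top_subset_str_compl_bot (hRC : IsRC L) :
    ({⊤}ᶜ : Set L) ⊆ Str {⊥}ᶜ := by
  intro z hz x hxz
  rcases eq_or_ne x ⊥ with rfl | hx
  · obtain ⟨w, hw, hwz⟩ := hRC.exists_ne_bot_inf_eq_bot hz
    exact ⟨w, hw, hwz⟩
  · exact ⟨x, hx, inf_eq_left.2 hxz⟩

lemma exists_mu_ne_zero_of_notMem_str
    (hmu : ∀ x y : L, x ≤ y → (x, y) ≠ ((⊥ : L), (⊤ : L)) → mu x y ≠ 0)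
    {F : Set L} (hF : F ≠ {⊥}ᶜ) {z : L} (hz : z ∉ Str F) :
    ∃ x ≤ z, (∀ w ∈ F, w ⊓ z ≠ x) ∧ mu x z ≠ 0 := by
  simp only [Str, Shatters, Set.mem_ofPred_eq, not_forall, not_exists, not_and] at hz
  obtain ⟨x, hxz, hx⟩ := hz
  by_cases hxz' : (x, z) = ((⊥ : L), (⊤ : L))
  · obtain ⟨rfl, rfl⟩ := Prod.mk.inj hxz'
    have hbot : (⊥ : L) ∉ F := fun h => hx ⊥ h (inf_top_eq _)
    obtain ⟨y, hy, hyF⟩ := Set.exists_of_ssubset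
      (Set.ssubset_iff_subset_ne.2 ⟨fun w hw (h : w = ⊥) => hbot (h ▸ hw), hF⟩)
    refine ⟨y, le_top, fun w hw h => hyF ((inf_top_eq w).symm.trans h ▸ hw), hmu y ⊤ le_top ?_⟩
    simpa [Prod.ext_iff] using Set.mem_compl_singleton_iff.1 hy
  · exact ⟨x, hxz, hx, hmu x z hxz hxz'⟩

end BoundedLattice

/-- A finite RC lattice whose Möbius function vanishes nowhere except possibly
on `(⊥, ⊤)` is SSP. -/
theorem ssp_of_mu_vanishing_once {L : Type*} [Lattice L] [Fintype L] [BoundedOrder L]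
    (hRC : IsRC L)
    (hmu : ∀ x y : L, x ≤ y → (x, y) ≠ ((⊥ : L), (⊤ : L)) → mu x y ≠ 0) :
    ∀ F : Set L, F.ncard ≤ (Str F).ncard := by
  intro F
  by_cases hF : F = {⊥}ᶜ
  · subst hF
    calc ({⊥}ᶜ : Set L).ncard = ({⊤}ᶜ : Set L).ncard := by
          rw [Set.ncard_compl, Set.ncard_compl, Set.ncard_singleton, Set.ncard_singleton]
      _ ≤ (Str {⊥}ᶜ).ncard := Set.ncard_le_ncard hRC.compl_top_subset_str_compl_bot
  · exact ncard_le_ncard_str_of_exists_mu_ne_zero fun z hz =>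
      exists_mu_ne_zero_of_notMem_str hmu hF hz
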